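/- arXiv:2203.13433 — 4 statements merged into one kernel-verified Lean document; each statement's English description precedes it below -/
import Mathlib

section
/- Let A = [a_1, …, a_K] be an M×K complex matrix with columns a_k, let P = diag(p_1, …, p_K) with p_k > 0 for all k, and let σ > 0. Then the matrix A P A^H + σ I is Hermitian positive definite, and for every k ∈ {1, …, K} the (real) quadratic form satisfies a_k^H (A P A^H + σ I)^{-1} a_k < p_k^{-1}. (Lemma 1, first part.) -/
open Matrix
open scoped ComplexOrder

/-!
Split `R = A P Aᴴ + σ I` as `S + p_k a_k a_kᴴ`, where `S = Σ_{j ≠ k} p_j a_j a_jᴴ + σ I` is still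
positive definite. For `x = R⁻¹ a_k` the number `e = xᴴ R x = xᴴ a_k` is real and positive, and
`0 < xᴴ S x = e - p_k e²`; hence `a_kᴴ R⁻¹ a_k = e < 1 / p_k`.
-/

namespace Matrix

section Semiring

variable {α m n : Type*} [CommSemiring α] [StarRing α] [Fintype n] [DecidableEq n]

theorem mul_diagonal_single_mul_conjTranspose (A : Matrix m n α) (k : n) (c : α) :
    A * diagonal (Pi.single k c) * Aᴴ = c • vecMulVec (fun i => A i k) (star fun i => A i k) := by
  ext i j
  simp [mul_apply, diagonal_apply, Pi.single_apply, vecMulVec_apply]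
  ring

theorem mul_diagonal_mul_conjTranspose_eq_update_add (A : Matrix m n α) (d : n → α) (k : n) :
    A * diagonal d * Aᴴ = A * diagonal (Function.update d k 0) * Aᴴ
      + d k • vecMulVec (fun i => A i k) (star fun i => A i k) := by
  rw [← mul_diagonal_single_mul_conjTranspose, ← Matrix.add_mul, ← Matrix.mul_add, diagonal_add]
  congr
  ext l
  by_cases hl : l = k <;> simp [hl]

end Semiring

section RCLike

variable {𝕜 n : Type*} [RCLike 𝕜] [Fintype n]

lemma dotProduct_mulVec_vecMulVec_self_star (x a : n → 𝕜) :
    star x ⬝ᵥ (vecMulVec a (star a) *ᵥ x) = (star x ⬝ᵥ a) * star (star x ⬝ᵥ a) := by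
  rw [vecMulVec_mulVec, dotProduct_smul, ← star_dotProduct, op_smul_eq_mul, mul_comm]

theorem dotProduct_inv_add_smul_vecMulVec_mulVec_lt_inv [DecidableEq n] {S : Matrix n n 𝕜}
    (hS : S.PosDef) (a : n → 𝕜) {p : ℝ} (hp : 0 < p) :
    star a ⬝ᵥ ((S + (p : 𝕜) • vecMulVec a (star a))⁻¹ *ᵥ a) < ((p⁻¹ : ℝ) : 𝕜) := by
  set R := S + (p : 𝕜) • vecMulVec a (star a)
  have hR : R.PosDef := hS.add_posSemidef
    ((posSemidef_vecMulVec_self_star a).smul ((RCLike.ofReal_nonneg (K := 𝕜)).mpr hp.le))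
  set x := R⁻¹ *ᵥ a
  have hRx : R *ᵥ x = a := by
    rw [mulVec_mulVec, mul_nonsing_inv _ ((isUnit_iff_isUnit_det _).mp hR.isUnit), one_mulVec]
  obtain hx | hx := eq_or_ne x 0
  · simpa [hx] using hp
  obtain ⟨e, he, hex⟩ : ∃ e > (0 : ℝ), (e : 𝕜) = star x ⬝ᵥ a :=
    hRx ▸ RCLike.pos_iff_exists_ofReal.mp (hR.dotProduct_mulVec_pos hx)
  have hquad : 0 < e - p * (e * e) := by
    have hSx := hS.dotProduct_mulVec_pos hx
    rwa [show S = R - (p : 𝕜) • vecMulVec a (star a) from (add_sub_cancel_right _ _).symm,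
      sub_mulVec, dotProduct_sub, smul_mulVec, dotProduct_smul,
      dotProduct_mulVec_vecMulVec_self_star, hRx, ← hex, RCLike.star_def, RCLike.conj_ofReal,
      smul_eq_mul, ← RCLike.ofReal_mul, ← RCLike.ofReal_mul, ← RCLike.ofReal_sub,
      RCLike.ofReal_pos] at hSx
  rw [star_dotProduct, ← hex, RCLike.star_def, RCLike.conj_ofReal, RCLike.ofReal_lt_ofReal,
    ← one_div, lt_div_iff₀ hp]
  nlinarith

end RCLike

end Matrix

/-- For `A` an `M × K` complex matrix, `P = diag p` with `p k > 0`, and `σ > 0`,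
the matrix `A P Aᴴ + σ I` is Hermitian positive definite, and for every column `a_k` of `A`,
`a_kᴴ (A P Aᴴ + σ I)⁻¹ a_k < (p k)⁻¹`. -/
theorem stmt0 {M K : ℕ} (A : Matrix (Fin M) (Fin K) ℂ) (p : Fin K → ℝ)
    (hp : ∀ k, 0 < p k) (σ : ℝ) (hσ : 0 < σ) :
    (A * Matrix.diagonal (fun k => (p k : ℂ)) * Aᴴ + (σ : ℂ) • (1 : Matrix (Fin M) (Fin M) ℂ)).PosDef ∧
    ∀ k : Fin K,
      (star (fun i => A i k) ⬝ᵥ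
        ((A * Matrix.diagonal (fun k => (p k : ℂ)) * Aᴴ + (σ : ℂ) • (1 : Matrix (Fin M) (Fin M) ℂ))⁻¹
          *ᵥ (fun i => A i k))).re < (p k)⁻¹ := by
  have hposDef (d : Fin K → ℂ) (hd : 0 ≤ d) :
      (A * diagonal d * Aᴴ + (σ : ℂ) • (1 : Matrix (Fin M) (Fin M) ℂ)).PosDef :=
    PosDef.posSemidef_add ((PosSemidef.diagonal hd).mul_mul_conjTranspose_same A)
      (PosDef.one.smul (Complex.zero_lt_real.mpr hσ))
  have hp₀ : 0 ≤ fun k => (p k : ℂ) := fun k => Complex.zero_le_real.mpr (hp k).le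
  refine ⟨hposDef _ hp₀, fun k => ?_⟩
  have hS := hposDef (Function.update _ k 0) (le_update_iff.2 ⟨le_rfl, fun j _ => hp₀ j⟩)
  rw [mul_diagonal_mul_conjTranspose_eq_update_add A _ k, add_right_comm]
  exact (Complex.lt_def.mp
    (dotProduct_inv_add_smul_vecMulVec_mulVec_lt_inv hS _ (hp k))).1.trans_eq (by simp)
end

section
/- Let B be an n×K̄ complex matrix with full column rank K̄ ≥ 1 and let V be a K̄×m complex matrix. Set T = B B^H, Z = B V, and X₀ = V^H V. Then: (i) the block matrix [[X₀, Z^H], [Z, T]] is positive semidefinite and has rank exactly K̄; and (ii) for every m×m Hermitian matrix X such that [[X, Z^H], [Z, T]] is positive semidefinite, one has tr(X) ≥ tr(X₀) = tr(V^H V). (Rank-constraint equivalence between problems (20) and (21) in Section III-C.) -/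
open Matrix
open scoped ComplexOrder

/-!
The block matrix is the Gram matrix `Uᴴ U` of `U = [V  Bᴴ]`, so it is positive semidefinite of
rank `rank U`, which is `K̄` because the block `Bᴴ` alone already has full row rank. For the trace
bound, a left inverse `L` of `B` writes `Z = T (Lᴴ V)`; the congruence by `[1; -Lᴴ V]` then turns
the positive semidefinite matrix `[[X, Zᴴ], [Z, T]]` into `X - Vᴴ V`, whose trace is nonnegative.
-/

namespace Matrix

lemma isUnit_of_rank_eq_card {n K : Type*} [Fintype n] [DecidableEq n] [Field K]
    {A : Matrix n n K} (h : A.rank = Fintype.card n) : IsUnit A := by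
  rw [← mulVec_surjective_iff_isUnit]
  refine (LinearMap.range_eq_top (f := A.mulVecLin)).mp (Submodule.eq_top_of_finrank_eq ?_)
  rw [Module.finrank_fintype_fun_eq_card]
  exact h

lemma exists_mul_eq_one_of_rank_eq_card_width {m n K : Type*} [Fintype m] [Fintype n]
    [DecidableEq n] [Field K] [PartialOrder K] [StarRing K] [StarOrderedRing K]
    {B : Matrix m n K} (h : B.rank = Fintype.card n) : ∃ L : Matrix n m K, L * B = 1 := by
  have hGram : IsUnit (Bᴴ * B).det :=
    (isUnit_iff_isUnit_det _).mp <| isUnit_of_rank_eq_card <| by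
      rw [rank_conjTranspose_mul_self, h]
  exact ⟨(Bᴴ * B)⁻¹ * Bᴴ, by rw [Matrix.mul_assoc, nonsing_inv_mul _ hGram]⟩

lemma rank_le_rank_fromCols_right {k m n R : Type*} [Fintype m] [Fintype n] [DecidableEq n]
    [Field R] (A : Matrix k m R) (B : Matrix k n R) : B.rank ≤ (fromCols A B).rank :=
  calc B.rank = rank (fromCols A B * fromRows (0 : Matrix m n R) 1 : Matrix k n R) := by
        rw [fromCols_mul_fromRows, Matrix.mul_zero, Matrix.mul_one, zero_add]
    _ ≤ (fromCols A B).rank := rank_mul_le_left _ _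

lemma conjTranspose_fromCols_mul_fromCols {k m n R : Type*} [Fintype k] [Semiring R] [StarRing R]
    (A : Matrix k m R) (B : Matrix k n R) :
    (fromCols A B)ᴴ * fromCols A B = fromBlocks (Aᴴ * A) (Aᴴ * B) (Bᴴ * A) (Bᴴ * B) := by
  rw [conjTranspose_fromCols_eq_fromRows_conjTranspose, fromRows_mul_fromCols]

/-- A Schur complement for singular `T`: congruence by `[1; -W]` clears the off-diagonal blocks. -/
lemma PosSemidef.sub_conjTranspose_mul_mul_of_fromBlocks {m n R : Type*} [Fintype m] [Fintype n]
    [DecidableEq m] [CommRing R] [PartialOrder R] [StarRing R]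
    {X : Matrix m m R} {Z : Matrix n m R} {T : Matrix n n R} {W : Matrix n m R}
    (hT : T.IsHermitian) (hZ : T * W = Z) (h : (fromBlocks X Zᴴ Z T).PosSemidef) :
    (X - Wᴴ * T * W).PosSemidef := by
  subst hZ
  set C : Matrix (m ⊕ n) m R := fromRows 1 (-W)
  have hC : Cᴴ * fromBlocks X (T * W)ᴴ (T * W) T * C = X - Wᴴ * T * W := by
    rw [conjTranspose_fromRows_eq_fromCols_conjTranspose, Matrix.mul_assoc,
      fromBlocks_mul_fromRows, fromCols_mul_fromRows, conjTranspose_mul, hT.eq]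
    simp only [conjTranspose_one, conjTranspose_neg, Matrix.one_mul, Matrix.mul_one,
      Matrix.mul_neg, Matrix.neg_mul, Matrix.mul_add, Matrix.mul_assoc]
    abel
  exact hC ▸ h.conjTranspose_mul_mul_same C

end Matrix

theorem stmt5_general {n m Kb : ℕ} (B : Matrix (Fin n) (Fin Kb) ℂ) (hB : B.rank = Kb)
    (V : Matrix (Fin Kb) (Fin m) ℂ) :
    (Matrix.fromBlocks (Vᴴ * V) (B * V)ᴴ (B * V) (B * Bᴴ)).PosSemidef ∧
    (Matrix.fromBlocks (Vᴴ * V) (B * V)ᴴ (B * V) (B * Bᴴ)).rank = Kb ∧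
    ∀ X : Matrix (Fin m) (Fin m) ℂ, X.IsHermitian →
      (Matrix.fromBlocks X (B * V)ᴴ (B * V) (B * Bᴴ)).PosSemidef →
      (Vᴴ * V).trace.re ≤ X.trace.re := by
  have hGram :
      fromBlocks (Vᴴ * V) (B * V)ᴴ (B * V) (B * Bᴴ) = (fromCols V Bᴴ)ᴴ * fromCols V Bᴴ := by
    rw [conjTranspose_fromCols_mul_fromCols, conjTranspose_mul, conjTranspose_conjTranspose]
  refine ⟨hGram ▸ posSemidef_conjTranspose_mul_self _, ?_, fun X _ hX => ?_⟩
  · rw [hGram, rank_conjTranspose_mul_self]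
    refine le_antisymm ((rank_le_card_height _).trans_eq (Fintype.card_fin Kb)) ?_
    calc Kb = Bᴴ.rank := by rw [rank_conjTranspose, hB]
      _ ≤ _ := rank_le_rank_fromCols_right V Bᴴ
  · obtain ⟨L, hL⟩ :=
      exists_mul_eq_one_of_rank_eq_card_width (B := B) (by rw [hB, Fintype.card_fin])
    have hZ : B * Bᴴ * (Lᴴ * V) = B * V := by
      rw [Matrix.mul_assoc, ← Matrix.mul_assoc Bᴴ, ← conjTranspose_mul, hL, conjTranspose_one,
        Matrix.one_mul]
    have hQ : (Lᴴ * V)ᴴ * (B * Bᴴ) * (Lᴴ * V) = Vᴴ * V := by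
      rw [Matrix.mul_assoc, hZ, conjTranspose_mul, conjTranspose_conjTranspose, Matrix.mul_assoc,
        ← Matrix.mul_assoc L, hL, Matrix.one_mul]
    have hSchur :=
      hX.sub_conjTranspose_mul_mul_of_fromBlocks (isHermitian_mul_conjTranspose_self B) hZ
    rw [hQ] at hSchur
    have := (Complex.nonneg_iff.mp hSchur.trace_nonneg).1
    rw [trace_sub, Complex.sub_re] at this
    linarith

/-- Let `B` be `n × K̄` with full column rank `K̄ ≥ 1`, `V` a `K̄ × m` matrix, and set
`T = B Bᴴ`, `Z = B V`, `X₀ = Vᴴ V`. Then the block matrix `[[X₀, Zᴴ], [Z, T]]` is positive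
semidefinite of rank exactly `K̄`, and every Hermitian `X` making `[[X, Zᴴ], [Z, T]]` positive
semidefinite satisfies `tr X ≥ tr X₀`. -/
theorem stmt5 {n m Kb : ℕ} (hK : 1 ≤ Kb) (B : Matrix (Fin n) (Fin Kb) ℂ) (hB : B.rank = Kb)
    (V : Matrix (Fin Kb) (Fin m) ℂ) :
    (Matrix.fromBlocks (Vᴴ * V) (B * V)ᴴ (B * V) (B * Bᴴ)).PosSemidef ∧
    (Matrix.fromBlocks (Vᴴ * V) (B * V)ᴴ (B * V) (B * Bᴴ)).rank = Kb ∧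
    ∀ X : Matrix (Fin m) (Fin m) ℂ, X.IsHermitian →
      (Matrix.fromBlocks X (B * V)ᴴ (B * V) (B * Bᴴ)).PosSemidef →
      (Vᴴ * V).trace.re ≤ X.trace.re :=
  stmt5_general B hB V
end

section
/- Let N ≥ 1, Ω ⊆ {1, …, N} with |Ω| = M, let K ≥ 1, and let f° = (f°_1, …, f°_K) be pairwise distinct frequencies in [−1/2, 1/2). Let S° be a K×L complex matrix with no zero row, and suppose 2K < spark(Ω) + rank(S°) − 1. Then: (i) for every K' ≤ K, every tuple f' = (f'_1, …, f'_{K'}) of pairwise distinct frequencies in [−1/2, 1/2) and every K'×L complex matrix S' with no zero row satisfying A_Ω(f') S' = A_Ω(f°) S°, one has K' = K and there is a permutation π of {1, …, K} with f'_{π(k)} = f°_k and the π(k)-th row of S' equal to the k-th row of S° for all k; and (ii) for every tuple g = (g_1, …, g_K) of pairwise distinct frequencies in [−1/2, 1/2), the vectors a_Ω(g_1), …, a_Ω(g_K) are linearly independent over ℂ, i.e., A_Ω(g) has full column rank. (Proposition 1.) -/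
open Matrix

/-- The steering vector of an SLA `Ω ⊆ {0, …, N-1}` at frequency `f`, with entries
`e^{i 2π n f}` for `n ∈ Ω` (0-based indexing). -/
noncomputable def steer (N : ℕ) (Ω : Finset (Fin N)) (f : ℝ) : {n // n ∈ Ω} → ℂ :=
  fun n => Complex.exp (Complex.I * (2 * Real.pi * f * ((n : Fin N) : ℕ)))

/-- The steering matrix `A_Ω(f) = [a_Ω(f_1), …, a_Ω(f_K)]`. -/
noncomputable def steerMat (N : ℕ) (Ω : Finset (Fin N)) {K : ℕ} (f : Fin K → ℝ) :
    Matrix {n // n ∈ Ω} (Fin K) ℂ :=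
  Matrix.of fun n k => steer N Ω (f k) n

/-- `spark Ω`: the smallest number of steering vectors `a_Ω(f)` (at distinct frequencies in
`[-1/2, 1/2)`) that are linearly dependent over `ℂ`. -/
noncomputable def spark (N : ℕ) (Ω : Finset (Fin N)) : ℕ :=
  sInf {d : ℕ | 0 < d ∧ ∃ f : Fin d → ℝ, Function.Injective f ∧
    (∀ i, f i ∈ Set.Ico (-(1 : ℝ) / 2) (1 / 2)) ∧
    ¬ LinearIndependent ℂ (fun i => steer N Ω (f i))}

private lemma indep_of_lt_spark (N : ℕ) (Ω : Finset (Fin N)) {d : ℕ} (hd : d < spark N Ω)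
    (g : Fin d → ℝ) (hg : Function.Injective g)
    (hmem : ∀ i, g i ∈ Set.Ico (-(1 : ℝ) / 2) (1 / 2)) :
    LinearIndependent ℂ (fun i => steer N Ω (g i)) := by
  by_contra h
  rcases Nat.eq_zero_or_pos d with rfl | hpos
  · exact h linearIndependent_empty_type
  · have hmem' : d ∈ {d : ℕ | 0 < d ∧ ∃ f : Fin d → ℝ, Function.Injective f ∧
        (∀ i, f i ∈ Set.Ico (-(1 : ℝ) / 2) (1 / 2)) ∧
        ¬ LinearIndependent ℂ (fun i => steer N Ω (f i))} := ⟨hpos, g, hg, hmem, h⟩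
    have h3 : spark N Ω ≤ d := Nat.sInf_le hmem'
    omega

private lemma indep_subtype (N : ℕ) (Ω : Finset (Fin N)) (T : Finset ℝ)
    (hT : T.card < spark N Ω)
    (hmem : ∀ x ∈ T, x ∈ Set.Ico (-(1 : ℝ) / 2) (1 / 2)) :
    LinearIndependent ℂ (fun x : {x : ℝ // x ∈ T} => steer N Ω x.val) := by
  let e : {x : ℝ // x ∈ T} ≃ Fin T.card := T.equivFin
  have hg : Function.Injective (fun i => ((e.symm i : {x : ℝ // x ∈ T}) : ℝ)) :=
    Subtype.coe_injective.comp e.symm.injective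
  have hi := indep_of_lt_spark N Ω hT _ hg (fun i => hmem _ (e.symm i).2)
  have h2 : (fun i => steer N Ω ((e.symm i : {x : ℝ // x ∈ T}) : ℝ)) =
      (fun x : {x : ℝ // x ∈ T} => steer N Ω x.val) ∘ e.symm := rfl
  rw [h2] at hi
  exact (linearIndependent_equiv e.symm).mp hi

/-- The steering matrix over a finite set of frequencies. -/
noncomputable def Amat (N : ℕ) (Ω : Finset (Fin N)) (T : Finset ℝ) :
    Matrix {n // n ∈ Ω} {x : ℝ // x ∈ T} ℂ :=
  Matrix.of fun n x => steer N Ω x.val n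

/-- Coefficient matrix of a representation, re-indexed over `T`. -/
noncomputable def Mof (T : Finset ℝ) {K0 L : ℕ} (f : Fin K0 → ℝ)
    (S : Matrix (Fin K0) (Fin L) ℂ) : Matrix {x : ℝ // x ∈ T} (Fin L) ℂ :=
  Matrix.of fun x l => ∑ k, if f k = x.val then S k l else 0

private lemma mul_Mof (N : ℕ) (Ω : Finset (Fin N)) (T : Finset ℝ) {K0 L : ℕ}
    (f : Fin K0 → ℝ) (hf : ∀ k, f k ∈ T) (S : Matrix (Fin K0) (Fin L) ℂ) :
    Amat N Ω T * Mof T f S = steerMat N Ω f * S := by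
  ext n l
  rw [Matrix.mul_apply, Matrix.mul_apply]
  simp only [Amat, Mof, steerMat, of_apply, Finset.mul_sum, mul_ite, mul_zero]
  rw [Finset.sum_comm]
  refine Finset.sum_congr rfl fun k _ => ?_
  rw [Finset.sum_eq_single (⟨f k, hf k⟩ : {x : ℝ // x ∈ T})]
  · simp
  · intro x _ hx
    exact if_neg fun hc => hx (Subtype.ext hc.symm)
  · exact fun h => absurd (Finset.mem_univ _) h

private lemma Mof_row {T : Finset ℝ} {K0 L : ℕ} {f : Fin K0 → ℝ} (hf : Function.Injective f)
    (S : Matrix (Fin K0) (Fin L) ℂ) (x : {x : ℝ // x ∈ T}) (k : Fin K0)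
    (hx : f k = x.val) (l : Fin L) : Mof T f S x l = S k l := by
  show (∑ j, if f j = x.val then S j l else 0) = S k l
  rw [Finset.sum_eq_single k]
  · rw [if_pos hx]
  · intro j _ hj
    exact if_neg fun hc => hj (hf (by rw [hc, hx]))
  · exact fun h => absurd (Finset.mem_univ _) h

private lemma matrix_rank_add_le {m n : Type*} [Fintype m] [Fintype n]
    (A B : Matrix m n ℂ) : (A + B).rank ≤ A.rank + B.rank := by
  rw [Matrix.rank, Matrix.rank, Matrix.rank, Matrix.mulVecLin_add]
  have h : LinearMap.range (A.mulVecLin + B.mulVecLin) ≤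
      LinearMap.range A.mulVecLin ⊔ LinearMap.range B.mulVecLin := by
    rintro x ⟨y, rfl⟩
    exact Submodule.mem_sup.2 ⟨A.mulVecLin y, ⟨y, rfl⟩, B.mulVecLin y, ⟨y, rfl⟩, rfl⟩
  exact (Submodule.finrank_mono h).trans
    (Submodule.finrank_add_le_finrank_add_finrank _ _)

private lemma matrix_rank_sum_le {ι m n : Type*} [Fintype m] [Fintype n] (s : Finset ι)
    (E : ι → Matrix m n ℂ) : (∑ j ∈ s, E j).rank ≤ ∑ j ∈ s, (E j).rank := by
  classical
  induction s using Finset.cons_induction with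
  | empty => simp [Matrix.rank_zero]
  | cons a s ha ih =>
    rw [Finset.sum_cons, Finset.sum_cons]
    exact (matrix_rank_add_le _ _).trans (by omega)

private lemma matrix_rank_rows_le {m m' n : Type*} [Fintype m] [Fintype m'] [Fintype n]
    (M : Matrix m n ℂ) (ρ : m' → m) : (M.submatrix ρ id).rank ≤ M.rank := by
  have h : M.submatrix ρ id = M.submatrix ρ (Equiv.refl n) := rfl
  rw [h, Matrix.rank, Matrix.rank, Matrix.mulVecLin_submatrix,
    LinearMap.range_comp, LinearMap.range_comp]
  refine (Submodule.finrank_map_le _ _).trans (Submodule.finrank_mono ?_)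
  exact LinearMap.map_le_range

private lemma rank_Amat_ge (N : ℕ) (Ω : Finset (Fin N)) (T : Finset ℝ)
    (hmem : ∀ x ∈ T, x ∈ Set.Ico (-(1 : ℝ) / 2) (1 / 2)) (d : ℕ)
    (hd : d < spark N Ω) (hdT : d ≤ T.card) : d ≤ (Amat N Ω T).rank := by
  obtain ⟨T', hT'sub, hT'card⟩ := Finset.exists_subset_card_eq hdT
  have hind : LinearIndependent ℂ (fun x : {x : ℝ // x ∈ T'} => steer N Ω x.val) :=
    indep_subtype N Ω T' (by omega) (fun x hx => hmem x (hT'sub hx))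
  rw [Matrix.rank_eq_finrank_span_cols]
  have h1 : Module.finrank ℂ (Submodule.span ℂ
      (Set.range fun x : {x : ℝ // x ∈ T'} => steer N Ω x.val)) = Fintype.card {x : ℝ // x ∈ T'} :=
    finrank_span_eq_card hind
  have hsub : (Set.range fun x : {x : ℝ // x ∈ T'} => steer N Ω x.val) ⊆
      Set.range (Amat N Ω T)ᵀ := by
    rintro _ ⟨x, rfl⟩
    exact ⟨⟨x.val, hT'sub x.2⟩, rfl⟩
  calc d = Fintype.card {x : ℝ // x ∈ T'} := by rw [Fintype.card_coe, hT'card]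
    _ = _ := h1.symm
    _ ≤ _ := Submodule.finrank_mono (Submodule.span_mono hsub)

/-- Proposition 1: If `2K < spark(Ω) + rank(S°) - 1`, then (i) the pair
`(f°, S°)` is uniquely identifiable (up to permutation) from the product `A_Ω(f°) S°` among
all representations with at most `K` distinct frequencies and no zero signal row, and
(ii) any `K` steering vectors at distinct frequencies in `[-1/2, 1/2)` are linearly
independent. -/
theorem stmt14 {N K L : ℕ} (hN : 1 ≤ N) (hK : 1 ≤ K) (Ω : Finset (Fin N))
    (fo : Fin K → ℝ) (hfo_inj : Function.Injective fo)
    (hfo_mem : ∀ k, fo k ∈ Set.Ico (-(1 : ℝ) / 2) (1 / 2))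
    (So : Matrix (Fin K) (Fin L) ℂ) (hSo : ∀ k, ∃ l, So k l ≠ 0)
    (hspark : 2 * K + 1 < spark N Ω + So.rank) :
    ((∀ (K' : ℕ), K' ≤ K → ∀ f' : Fin K' → ℝ, Function.Injective f' →
        (∀ k, f' k ∈ Set.Ico (-(1 : ℝ) / 2) (1 / 2)) →
        ∀ S' : Matrix (Fin K') (Fin L) ℂ, (∀ k, ∃ l, S' k l ≠ 0) →
        steerMat N Ω f' * S' = steerMat N Ω fo * So →
        K' = K ∧ ∃ π : Fin K ≃ Fin K', ∀ k,
          f' (π k) = fo k ∧ ∀ l, S' (π k) l = So k l) ∧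
      (∀ g : Fin K → ℝ, Function.Injective g →
        (∀ k, g k ∈ Set.Ico (-(1 : ℝ) / 2) (1 / 2)) →
        LinearIndependent ℂ (fun k => steer N Ω (g k)))) := by
  classical
  have hrK : So.rank ≤ K := (Matrix.rank_le_card_height So).trans (by simp)
  constructor
  · intro K' hK' f' hf'inj hf'mem S' hS' heq
    set T : Finset ℝ := Finset.image fo Finset.univ ∪ Finset.image f' Finset.univ with hT
    have hfoT : ∀ k, fo k ∈ T := fun k =>
      Finset.mem_union_left _ (Finset.mem_image_of_mem _ (Finset.mem_univ k))
    have hf'T : ∀ j, f' j ∈ T := fun j =>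
      Finset.mem_union_right _ (Finset.mem_image_of_mem _ (Finset.mem_univ j))
    have hTmem : ∀ x ∈ T, x ∈ Set.Ico (-(1 : ℝ) / 2) (1 / 2) := by
      intro x hx
      rcases Finset.mem_union.mp hx with hx | hx
      · obtain ⟨k, _, rfl⟩ := Finset.mem_image.mp hx
        exact hfo_mem k
      · obtain ⟨k, _, rfl⟩ := Finset.mem_image.mp hx
        exact hf'mem k
    have hAM : Amat N Ω T * (Mof T fo So - Mof T f' S') = 0 := by
      rw [Matrix.mul_sub, mul_Mof N Ω T fo hfoT So, mul_Mof N Ω T f' hf'T S', heq, sub_self]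
    have hcardfo : (Finset.image fo Finset.univ).card = K := by
      rw [Finset.card_image_of_injective _ hfo_inj, Finset.card_univ, Fintype.card_fin]
    have hcardf' : (Finset.image f' Finset.univ).card = K' := by
      rw [Finset.card_image_of_injective _ hf'inj, Finset.card_univ, Fintype.card_fin]
    have hM : Mof T fo So - Mof T f' S' = 0 := by
      by_cases hts : T.card < spark N Ω
      · have hind := indep_subtype N Ω T hts hTmem
        ext x l
        have h0 : ∑ y : {x : ℝ // x ∈ T},
            ((Mof T fo So - Mof T f' S') y l) • steer N Ω y.val = 0 := by
          funext n
          have hz : (Amat N Ω T * (Mof T fo So - Mof T f' S')) n l = 0 := by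
            rw [hAM]; simp
          rw [Matrix.mul_apply] at hz
          simpa [Amat, Finset.sum_apply, Pi.smul_apply, smul_eq_mul, mul_comm] using hz
        have := Fintype.linearIndependent_iff.mp hind
          (fun y => (Mof T fo So - Mof T f' S') y l) h0 x
        simpa using this
      · exfalso
        push_neg at hts
        have hs1 : spark N Ω - 1 ≤ (Amat N Ω T).rank :=
          rank_Amat_ge N Ω T hTmem _ (by omega) (by omega)
        have h2 : (Amat N Ω T).rank + (Mof T fo So - Mof T f' S').rank ≤ T.card := by
          have := Matrix.rank_add_rank_le_card_of_mul_eq_zero hAM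
          simpa [Fintype.card_coe] using this
        set ρ : Fin K → {x : ℝ // x ∈ T} := fun k => ⟨fo k, hfoT k⟩ with hρ
        have hSoeq : So = (Mof T fo So - Mof T f' S').submatrix ρ id +
            (Mof T f' S').submatrix ρ id := by
          ext k l
          simp only [Matrix.add_apply, Matrix.submatrix_apply, Matrix.sub_apply, id]
          rw [Mof_row hfo_inj So (ρ k) k rfl]
          ring
        have hB : ((Mof T fo So - Mof T f' S').submatrix ρ id).rank ≤
            (Mof T fo So - Mof T f' S').rank := matrix_rank_rows_le _ ρ
        have hSor : So.rank ≤ ((Mof T fo So - Mof T f' S').submatrix ρ id).rank +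
            ((Mof T f' S').submatrix ρ id).rank := by
          conv_lhs => rw [hSoeq]
          exact matrix_rank_add_le _ _
        have hCE : (Mof T f' S').submatrix ρ id = ∑ j : Fin K',
            (Matrix.of fun k (_ : Unit) => if f' j = fo k then (1 : ℂ) else 0) *
            (Matrix.of fun (_ : Unit) l => S' j l) := by
          ext k l
          rw [Matrix.sum_apply]
          show (∑ j, if f' j = fo k then S' j l else 0) = _
          refine Finset.sum_congr rfl fun j _ => ?_
          simp [Matrix.mul_apply, ite_mul]
        have hEr : ∀ j : Fin K',
            ((Matrix.of fun k (_ : Unit) => if f' j = fo k then (1 : ℂ) else 0) *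
              (Matrix.of fun (_ : Unit) l => S' j l)).rank ≤
            if f' j ∈ Finset.image fo Finset.univ then 1 else 0 := by
          intro j
          by_cases hj : f' j ∈ Finset.image fo Finset.univ
          · rw [if_pos hj]
            exact (Matrix.rank_mul_le_right _ _).trans
              ((Matrix.rank_le_card_height _).trans (by simp))
          · rw [if_neg hj]
            have hz : (Matrix.of fun k (_ : Unit) =>
                if f' j = fo k then (1 : ℂ) else 0) = 0 := by
              ext k u
              exact if_neg fun hc => hj (Finset.mem_image.mpr ⟨k, Finset.mem_univ k, hc.symm⟩)
            rw [hz, Matrix.zero_mul, Matrix.rank_zero]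
        have hC : ((Mof T f' S').submatrix ρ id).rank ≤
            (Finset.univ.filter fun j : Fin K' => f' j ∈ Finset.image fo Finset.univ).card := by
          rw [hCE]
          refine (matrix_rank_sum_le _ _).trans ?_
          rw [Finset.card_filter]
          exact Finset.sum_le_sum fun j _ => hEr j
        have hfilter : (Finset.univ.filter
              fun j : Fin K' => f' j ∈ Finset.image fo Finset.univ).card
            = (Finset.image fo Finset.univ ∩ Finset.image f' Finset.univ).card := by
          rw [← Finset.card_image_of_injective
            (Finset.univ.filter fun j : Fin K' => f' j ∈ Finset.image fo Finset.univ) hf'inj]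
          congr 1
          ext y
          simp only [Finset.mem_image, Finset.mem_filter, Finset.mem_inter, Finset.mem_univ,
            true_and]
          constructor
          · rintro ⟨j, hj, rfl⟩
            exact ⟨hj, j, rfl⟩
          · rintro ⟨hy, j, rfl⟩
            exact ⟨j, hy, rfl⟩
        have hunion : T.card +
            (Finset.image fo Finset.univ ∩ Finset.image f' Finset.univ).card = K + K' := by
          rw [hT, Finset.card_union_add_card_inter, hcardfo, hcardf']
        omega
    have hMoM : Mof T fo So = Mof T f' S' := sub_eq_zero.mp hM
    have hMo : ∀ k l, So k l = Mof T f' S' ⟨fo k, hfoT k⟩ l := by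
      intro k l
      rw [← congrFun (congrFun hMoM ⟨fo k, hfoT k⟩) l, Mof_row hfo_inj So _ k rfl]
    have hex : ∀ k, ∃ j, f' j = fo k := by
      intro k
      by_contra hcon
      push_neg at hcon
      obtain ⟨l, hl⟩ := hSo k
      apply hl
      rw [hMo k l]
      show (∑ j, if f' j = fo k then S' j l else 0) = 0
      exact Finset.sum_eq_zero fun j _ => if_neg (hcon j)
    choose π0 hπ0 using hex
    have hπ0inj : Function.Injective π0 := fun a b hab =>
      hfo_inj (by rw [← hπ0 a, ← hπ0 b, hab])
    have hKK' : K ≤ K' := by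
      have := Fintype.card_le_of_injective π0 hπ0inj
      simpa using this
    have hK'K : K' = K := le_antisymm hK' hKK'
    have hbij : Function.Bijective π0 :=
      (Fintype.bijective_iff_injective_and_card π0).mpr ⟨hπ0inj, by simp [hK'K]⟩
    refine ⟨hK'K, Equiv.ofBijective π0 hbij, fun k => ⟨hπ0 k, fun l => ?_⟩⟩
    have hrow : Mof T f' S' ⟨fo k, hfoT k⟩ l = S' (π0 k) l :=
      Mof_row hf'inj S' _ (π0 k) (hπ0 k) l
    show S' (π0 k) l = So k l
    rw [hMo k l, hrow]
  · intro g hginj hgmem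
    exact indep_of_lt_spark N Ω (by omega) g hginj hgmem
end

section
/- Let R₁ and R₂ be n×n Hermitian positive definite matrices and X an n×m complex matrix. Then tr(X^H (R₁ + R₂)^{-1} X) is the minimum over all n×m complex matrices Z of tr(Z^H R₁^{-1} Z) + tr((X − Z)^H R₂^{-1} (X − Z)); moreover the minimum is attained at Z = R₁ (R₁ + R₂)^{-1} X. (Identity (13) used for the problem reformulation in Section III-C.) -/
/-!
Write `X = (R₁ + R₂) Y` and `Z = R₁ Y + W`. Then `X - Z = R₂ Y - W`, the cross terms cancel, and
`Zᴴ R₁⁻¹ Z + (X - Z)ᴴ R₂⁻¹ (X - Z) = Xᴴ (R₁ + R₂)⁻¹ X + Wᴴ (R₁⁻¹ + R₂⁻¹) W`.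
The last term has nonnegative real trace and vanishes at `W = 0`, i.e. at `Z = R₁ (R₁ + R₂)⁻¹ X`.
-/

open Matrix
open scoped ComplexOrder

namespace Matrix

section CompletingTheSquare

variable {R : Type*} [CommRing R] [StarRing R] {n m : Type*} [Fintype n] [DecidableEq n]
  {A B : Matrix n n R}

theorem conjTranspose_mul_inv_of_isHermitian (hA : A.IsHermitian) (hAu : IsUnit A.det)
    (Y : Matrix n m R) : (A * Y)ᴴ * A⁻¹ = Yᴴ := by
  rw [conjTranspose_mul, hA.eq, Matrix.mul_assoc, mul_nonsing_inv _ hAu, Matrix.mul_one]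

theorem inv_quadForm_mul_add_add_inv_quadForm_mul_sub (hA : A.IsHermitian) (hB : B.IsHermitian)
    (hAu : IsUnit A.det) (hBu : IsUnit B.det) (Y W : Matrix n m R) :
    (A * Y + W)ᴴ * A⁻¹ * (A * Y + W) + (B * Y - W)ᴴ * B⁻¹ * (B * Y - W)
      = Yᴴ * (A + B) * Y + Wᴴ * (A⁻¹ + B⁻¹) * W := by
  simp only [conjTranspose_add, conjTranspose_sub, Matrix.add_mul, Matrix.sub_mul,
    conjTranspose_mul_inv_of_isHermitian hA hAu, conjTranspose_mul_inv_of_isHermitian hB hBu,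
    Matrix.mul_add, Matrix.mul_sub, Matrix.mul_assoc, nonsing_inv_mul_cancel_left _ _ hAu,
    nonsing_inv_mul_cancel_left _ _ hBu]
  abel

theorem inv_quadForm_add_inv_quadForm_sub (hA : A.IsHermitian) (hB : B.IsHermitian)
    (hAu : IsUnit A.det) (hBu : IsUnit B.det) (hABu : IsUnit (A + B).det) (X Z : Matrix n m R) :
    Zᴴ * A⁻¹ * Z + (X - Z)ᴴ * B⁻¹ * (X - Z)
      = Xᴴ * (A + B)⁻¹ * X
        + (Z - A * (A + B)⁻¹ * X)ᴴ * (A⁻¹ + B⁻¹) * (Z - A * (A + B)⁻¹ * X) := by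
  obtain ⟨Y, rfl⟩ : ∃ Y, X = (A + B) * Y :=
    ⟨(A + B)⁻¹ * X, (mul_nonsing_inv_cancel_left _ X hABu).symm⟩
  obtain ⟨W, rfl⟩ : ∃ W, Z = A * Y + W := ⟨Z - A * Y, by abel⟩
  have hY : A * (A + B)⁻¹ * ((A + B) * Y) = A * Y := by
    rw [Matrix.mul_assoc, nonsing_inv_mul_cancel_left _ _ hABu]
  have hXZ : (A + B) * Y - (A * Y + W) = B * Y - W := by rw [Matrix.add_mul]; abel
  rw [hY, hXZ, add_sub_cancel_left, inv_quadForm_mul_add_add_inv_quadForm_mul_sub hA hB hAu hBu,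
    conjTranspose_mul_inv_of_isHermitian (hA.add hB) hABu, Matrix.mul_assoc]

end CompletingTheSquare

theorem PosSemidef.re_trace_conjTranspose_mul_mul_nonneg {𝕜 n m : Type*} [RCLike 𝕜] [Fintype n]
    [Fintype m] {M : Matrix n n 𝕜} (hM : M.PosSemidef) (W : Matrix n m 𝕜) :
    0 ≤ RCLike.re (Wᴴ * M * W).trace :=
  (RCLike.nonneg_iff.mp (hM.conjTranspose_mul_mul_same W).trace_nonneg).1

end Matrix

/-- identity (13): For positive definite `R₁, R₂`,
`tr(Xᴴ (R₁ + R₂)⁻¹ X)` is the minimum over `Z` of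
`tr(Zᴴ R₁⁻¹ Z) + tr((X - Z)ᴴ R₂⁻¹ (X - Z))`, attained at `Z = R₁ (R₁ + R₂)⁻¹ X`. -/
theorem stmt16 {n m : ℕ} (R₁ R₂ : Matrix (Fin n) (Fin n) ℂ)
    (h₁ : R₁.PosDef) (h₂ : R₂.PosDef) (X : Matrix (Fin n) (Fin m) ℂ) :
    (∀ Z : Matrix (Fin n) (Fin m) ℂ,
      (Xᴴ * (R₁ + R₂)⁻¹ * X).trace.re
        ≤ (Zᴴ * R₁⁻¹ * Z).trace.re + ((X - Z)ᴴ * R₂⁻¹ * (X - Z)).trace.re) ∧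
    ((fun Z : Matrix (Fin n) (Fin m) ℂ =>
        (Zᴴ * R₁⁻¹ * Z).trace.re + ((X - Z)ᴴ * R₂⁻¹ * (X - Z)).trace.re)
      (R₁ * (R₁ + R₂)⁻¹ * X)
      = (Xᴴ * (R₁ + R₂)⁻¹ * X).trace.re) := by
  have isUnit_det {M : Matrix (Fin n) (Fin n) ℂ} (hM : M.PosDef) : IsUnit M.det :=
    (isUnit_iff_isUnit_det M).mp hM.isUnit
  have key (Z : Matrix (Fin n) (Fin m) ℂ) :
      (Zᴴ * R₁⁻¹ * Z).trace.re + ((X - Z)ᴴ * R₂⁻¹ * (X - Z)).trace.re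
        = (Xᴴ * (R₁ + R₂)⁻¹ * X).trace.re + ((Z - R₁ * (R₁ + R₂)⁻¹ * X)ᴴ * (R₁⁻¹ + R₂⁻¹)
            * (Z - R₁ * (R₁ + R₂)⁻¹ * X)).trace.re := by
    rw [← Complex.add_re, ← trace_add, ← Complex.add_re, ← trace_add,
      inv_quadForm_add_inv_quadForm_sub h₁.isHermitian h₂.isHermitian (isUnit_det h₁)
        (isUnit_det h₂) (isUnit_det (h₁.add h₂))]
  refine ⟨fun Z => ?_, ?_⟩
  · rw [key]
    exact le_add_of_nonneg_right
      ((h₁.inv.add h₂.inv).posSemidef.re_trace_conjTranspose_mul_mul_nonneg _)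
  · simp only [key, sub_self, conjTranspose_zero, Matrix.zero_mul, trace_zero, Complex.zero_re,
      add_zero]
end
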